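/- arXiv:2501.01969 — 7 statements merged into one kernel-verified Lean document; each statement's English description precedes it below -/
import Mathlib

section
/- There exists a constant c > 0 such that for all k ≥ 1, N ≥ 2, T ≥ 1 and C ≥ 1 there exists a Decision Maker strategy σ with the following property: for every approval profile sequence S : Fin T → Fin N → Finset (Fin k) whose conflict number is at most C, every agent's dissatisfaction in the play of σ against S is at most c · T^(1 - 1/(k+1)) · (C · k · Real.log N)^(1/(k+1)). -/
open Finset

/-- The option chosen by strategy `σ` against the approval profile sequence `S`
in round `r`: `σ` applied to the history `[S 0, …, S r]`. -/
def play {k N T : ℕ} (σ : List (Fin N → Finset (Fin k)) → Fin k)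
    (S : Fin T → Fin N → Finset (Fin k)) (r : Fin T) : Fin k :=
  σ (List.ofFn (fun j : Fin (r.val + 1) => S (Fin.castLE r.isLt j)))

/-- The dissatisfaction of agent `i` in the play of `σ` against `S`:
the number of rounds in which the chosen option is not approved by `i`. -/
def dissat {k N T : ℕ} (σ : List (Fin N → Finset (Fin k)) → Fin k)
    (S : Fin T → Fin N → Finset (Fin k)) (i : Fin N) : ℕ :=
  (Finset.univ.filter fun r : Fin T => play σ S r ∉ S r i).card

/-- The conflict number of `S` is at most `C`: every subset `A` of agents of size
at most `k` is in a conflict (no option satisfies everyone in `A`) in at most `C` rounds. -/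
def conflictNumberLe {k N T : ℕ} (S : Fin T → Fin N → Finset (Fin k)) (C : ℕ) : Prop :=
  ∀ A : Finset (Fin N), A.card ≤ k →
    (Finset.univ.filter fun r : Fin T => ¬ ∃ θ : Fin k, ∀ i ∈ A, θ ∈ S r i).card ≤ C

/-!
The Decision Maker plays exponential weights: writing `D i` for the dissatisfaction of agent
`i` so far, it picks an option minimising the total weight `w` of its rejecters, agent `i`
weighing `exp (η D i)`. The potential `Φ = ∑ i, exp (η D i)` bounds every `exp (η D i)` and
grows by `(exp η - 1) w` per round. As a minimum, `w ^ k` is at most the product of the `k`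
rejection weights, which expands into a sum over `k`-tuples of agents rejecting pairwise
different options, i.e. over sets of at most `k` agents in conflict; hence
`∑ r < s, w r ^ k ≤ C Φ s ^ k`. So while `Φ` stays within a factor two, few rounds have
`w ≥ ε Φ`, and every other round multiplies `Φ` by at most `exp ((exp η - 1) ε)`. This gives
`η D i ≤ log N + O(η ε T) + log 2`, and balancing `log N / η` against `ε T` gives the bound;
when the balancing `η` would exceed `1`, `T` itself is already below the bound.
-/

open Real

noncomputable def dyadicLayer (x : ℝ) : ℕ := Nat.log 2 ⌊x⌋₊

lemma two_pow_dyadicLayer_le {x : ℝ} (hx : 1 ≤ x) : (2 : ℝ) ^ dyadicLayer x ≤ x := by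
  have hfloor : ⌊x⌋₊ ≠ 0 := Nat.pos_iff_ne_zero.1 ((Nat.one_le_floor_iff x).2 hx)
  calc (2 : ℝ) ^ dyadicLayer x = ((2 ^ dyadicLayer x : ℕ) : ℝ) := by push_cast; rfl
    _ ≤ ⌊x⌋₊ := by exact_mod_cast Nat.pow_log_le_self 2 hfloor
    _ ≤ x := Nat.floor_le (by linarith)

lemma lt_two_pow_dyadicLayer_succ {x : ℝ} (hx : 0 ≤ x) : x < 2 ^ (dyadicLayer x + 1) := by
  have := (Nat.floor_lt hx).1 (Nat.lt_pow_succ_log_self (b := 2) (by norm_num) ⌊x⌋₊)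
  exact_mod_cast this

lemma dyadicLayer_mono : Monotone dyadicLayer :=
  fun _ _ h => Nat.log_mono_right (Nat.floor_le_floor h)

structure PotentialRecursion (Φ w : ℕ → ℝ) (γ : ℝ) : Prop where
  rate_nonneg : 0 ≤ γ
  weight_nonneg : ∀ r, 0 ≤ w r
  weight_le : ∀ r, w r ≤ Φ r
  step : ∀ r, Φ (r + 1) = Φ r + γ * w r

noncomputable def heavyRounds (Φ w : ℕ → ℝ) (ε : ℝ) (s : ℕ) : Finset ℕ :=
  {r ∈ range s | ε * Φ r ≤ w r}

namespace PotentialRecursion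

variable {Φ w : ℕ → ℝ} {γ ε : ℝ}

lemma monotone (h : PotentialRecursion Φ w γ) : Monotone Φ :=
  monotone_nat_of_le_succ fun r => by nlinarith [h.step r, h.weight_nonneg r, h.rate_nonneg]

lemma nonneg (h : PotentialRecursion Φ w γ) (r : ℕ) : 0 ≤ Φ r :=
  (h.weight_nonneg r).trans (h.weight_le r)

lemma succ_le (h : PotentialRecursion Φ w γ) (r : ℕ) : Φ (r + 1) ≤ (1 + γ) * Φ r := by
  nlinarith [h.step r, h.weight_le r, h.rate_nonneg]

lemma le_exp (h : PotentialRecursion Φ w γ) (hε : 0 ≤ ε) (s : ℕ) :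
    Φ s ≤ Φ 0 * exp (γ * (ε * s + #(heavyRounds Φ w ε s))) := by
  induction s with
  | zero => simp [heavyRounds]
  | succ s ih =>
    set heavy : ℝ := if ε * Φ s ≤ w s then 1 else 0
    have hw : w s ≤ (ε + heavy) * Φ s := by
      unfold heavy; split_ifs <;> nlinarith [h.weight_le s, h.nonneg s]
    have hcard : (#(heavyRounds Φ w ε (s + 1)) : ℝ) = #(heavyRounds Φ w ε s) + heavy := by
      simp only [heavy, heavyRounds, range_add_one, filter_insert]
      split_ifs <;> simp [card_insert_of_notMem]
    calc Φ (s + 1) ≤ Φ s * (1 + γ * (ε + heavy)) := by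
          nlinarith [h.step s, h.rate_nonneg]
      _ ≤ Φ s * exp (γ * (ε + heavy)) := by
          gcongr
          · exact h.nonneg s
          · linarith [add_one_le_exp (γ * (ε + heavy))]
      _ ≤ Φ 0 * exp (γ * (ε * s + #(heavyRounds Φ w ε s))) * exp (γ * (ε + heavy)) := by
          gcongr
      _ = Φ 0 * exp (γ * (ε * ↑(s + 1) + #(heavyRounds Φ w ε (s + 1)))) := by
          rw [mul_assoc, ← exp_add, hcard]; push_cast; ring_nf

lemma card_heavyRounds_layer_mul_le (h : PotentialRecursion Φ w γ) (hΦ0 : 0 < Φ 0)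
    (hε : 0 ≤ ε) {k C T : ℕ}
    (hbudget : ∀ s ≤ T, ∑ r ∈ range s, w r ^ k ≤ C * Φ s ^ k) (j : ℕ) :
    #{r ∈ heavyRounds Φ w ε T | dyadicLayer (Φ r / Φ 0) = j} * ε ^ k ≤
      C * (2 * (1 + γ)) ^ k := by
  set F := {r ∈ heavyRounds Φ w ε T | dyadicLayer (Φ r / Φ 0) = j}
  obtain hF | hF := F.eq_empty_or_nonempty
  · have := h.rate_nonneg
    simp only [hF, card_empty, CharP.cast_eq_zero, zero_mul]; positivity
  have hmem {r : ℕ} (hr : r ∈ F) :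
      r < T ∧ ε * Φ r ≤ w r ∧ dyadicLayer (Φ r / Φ 0) = j := by
    simpa [F, heavyRounds, and_assoc] using hr
  have hlayer {r : ℕ} (hr : r ∈ F) : 2 ^ j * Φ 0 ≤ Φ r ∧ Φ r < 2 ^ (j + 1) * Φ 0 := by
    have h1 : 1 ≤ Φ r / Φ 0 := (one_le_div hΦ0).2 (h.monotone (Nat.zero_le r))
    rw [← (hmem hr).2.2, ← le_div_iff₀ hΦ0, ← div_lt_iff₀ hΦ0]
    exact ⟨two_pow_dyadicLayer_le h1, lt_two_pow_dyadicLayer_succ (by linarith)⟩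
  -- every round of `F` precedes `s + 1`, where `Φ` is still below `2 (1 + γ) 2 ^ j Φ 0`
  set s := F.max' hF
  have hs := F.max'_mem hF
  have hΦs : Φ (s + 1) ≤ 2 * (1 + γ) * (2 ^ j * Φ 0) := by
    calc Φ (s + 1) ≤ (1 + γ) * Φ s := h.succ_le s
      _ ≤ (1 + γ) * (2 ^ (j + 1) * Φ 0) := by
          gcongr; · linarith [h.rate_nonneg]
          exact (hlayer hs).2.le
      _ = _ := by ring
  have hsum : #F * (ε * (2 ^ j * Φ 0)) ^ k ≤ C * (2 * (1 + γ) * (2 ^ j * Φ 0)) ^ k := by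
    calc #F * (ε * (2 ^ j * Φ 0)) ^ k ≤ ∑ r ∈ F, w r ^ k := by
          rw [← nsmul_eq_mul]
          refine card_nsmul_le_sum _ _ _ fun r hr => pow_le_pow_left₀ (by positivity) ?_ k
          exact (mul_le_mul_of_nonneg_left (hlayer hr).1 hε).trans (hmem hr).2.1
      _ ≤ ∑ r ∈ range (s + 1), w r ^ k :=
          sum_le_sum_of_subset_of_nonneg
            (fun r hr => mem_range.2 (Nat.lt_succ_of_le (F.le_max' r hr)))
            fun r _ _ => pow_nonneg (h.weight_nonneg r) k
      _ ≤ C * Φ (s + 1) ^ k := hbudget (s + 1) (hmem hs).1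
      _ ≤ C * (2 * (1 + γ) * (2 ^ j * Φ 0)) ^ k := by
          gcongr; exact h.nonneg _
  rw [mul_pow, mul_pow (2 * (1 + γ)), ← mul_assoc, ← mul_assoc] at hsum
  exact le_of_mul_le_mul_right hsum (by positivity)

theorem log_div_le (h : PotentialRecursion Φ w γ) (hΦ0 : 0 < Φ 0) (hε : 0 < ε) {k C T : ℕ}
    (hbudget : ∀ s ≤ T, ∑ r ∈ range s, w r ^ k ≤ C * Φ s ^ k)
    (hsmall : γ * C * (2 * (1 + γ)) ^ k ≤ ε ^ k * (log 2 / 2)) :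
    log (Φ T / Φ 0) ≤ 2 * γ * ε * T + log 2 := by
  set H := heavyRounds Φ w ε T
  set J := dyadicLayer (Φ T / Φ 0)
  have hΦT : 1 ≤ Φ T / Φ 0 := (one_le_div hΦ0).2 (h.monotone (Nat.zero_le T))
  have hgrowth : log (Φ T / Φ 0) ≤ γ * (ε * T + #H) := by
    rw [log_le_iff_le_exp (by linarith), div_le_iff₀' hΦ0]
    exact h.le_exp hε.le T
  have hJ : J * log 2 ≤ log (Φ T / Φ 0) := by
    rw [← log_pow]; exact log_le_log (by positivity) (two_pow_dyadicLayer_le hΦT)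
  -- the rounds of `H` lie in the layers `0, …, J`, each holding few of them
  have hH : #H * ε ^ k ≤ (J + 1) * (C * (2 * (1 + γ)) ^ k) := by
    have hmaps : ∀ r ∈ H, dyadicLayer (Φ r / Φ 0) ∈ range (J + 1) := fun r hr =>
      mem_range.2 <| Nat.lt_succ_of_le <| dyadicLayer_mono <| div_le_div_of_nonneg_right
        (h.monotone (mem_range.1 (mem_filter.1 hr).1).le) hΦ0.le
    rw [card_eq_sum_card_fiberwise hmaps, Nat.cast_sum, sum_mul]
    calc _ ≤ ∑ _j ∈ range (J + 1), (C * (2 * (1 + γ)) ^ k : ℝ) :=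
          sum_le_sum fun j _ => h.card_heavyRounds_layer_mul_le hΦ0 hε.le hbudget j
      _ = _ := by simp
  have hγH : γ * #H ≤ (J + 1) * (log 2 / 2) := by
    refine le_of_mul_le_mul_right ?_ (pow_pos hε k)
    calc γ * #H * ε ^ k ≤ γ * ((J + 1) * (C * (2 * (1 + γ)) ^ k)) := by
          rw [mul_assoc]; exact mul_le_mul_of_nonneg_left hH h.rate_nonneg
      _ = (J + 1) * (γ * C * (2 * (1 + γ)) ^ k) := by ring
      _ ≤ (J + 1) * (ε ^ k * (log 2 / 2)) := by gcongr
      _ = _ := by ring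
  nlinarith [h.rate_nonneg]

end PotentialRecursion

section ExponentialWeights

variable {k N : ℕ} (η : ℝ) (D : Fin N → ℕ) (p : Fin N → Finset (Fin k))

noncomputable def potential : ℝ := ∑ i, exp (η * D i)

noncomputable def rejectionWeight (θ : Fin k) : ℝ := ∑ i with θ ∉ p i, exp (η * D i)

def recordChoice (θ : Fin k) : Fin N → ℕ := fun i => D i + if θ ∈ p i then 0 else 1

lemma potential_zero : potential (N := N) η 0 = N := by simp [potential]

lemma exp_le_potential (i : Fin N) : exp (η * D i) ≤ potential η D :=
  single_le_sum (f := fun j => exp (η * D j)) (fun _ _ => (exp_pos _).le) (mem_univ i)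

lemma rejectionWeight_nonneg (θ : Fin k) : 0 ≤ rejectionWeight η D p θ :=
  sum_nonneg fun _ _ => (exp_pos _).le

lemma rejectionWeight_le_potential (θ : Fin k) : rejectionWeight η D p θ ≤ potential η D :=
  sum_le_sum_of_subset_of_nonneg (filter_subset _ _) fun _ _ _ => (exp_pos _).le

lemma potential_recordChoice (θ : Fin k) :
    potential η (recordChoice D p θ) =
      potential η D + (exp η - 1) * rejectionWeight η D p θ := by
  rw [potential, potential, rejectionWeight, sum_filter, mul_sum, ← sum_add_distrib]
  refine sum_congr rfl fun i _ => ?_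
  by_cases hθ : θ ∈ p i
  · simp [recordChoice, hθ]
  · simp only [recordChoice, hθ, if_false, not_false_eq_true, if_true]
    rw [Nat.cast_add_one, mul_add_one, exp_add]; ring

lemma prod_rejectionWeight :
    ∏ θ, rejectionWeight η D p θ =
      ∑ x ∈ Fintype.piFinset fun θ => {i | θ ∉ p i}, ∏ θ, exp (η * D (x θ)) :=
  prod_univ_sum _ _

variable [NeZero k]

noncomputable def ewPick : Fin k := (Finite.exists_min (rejectionWeight η D p)).choose

lemma rejectionWeight_ewPick_le (θ : Fin k) :
    rejectionWeight η D p (ewPick η D p) ≤ rejectionWeight η D p θ :=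
  (Finite.exists_min (rejectionWeight η D p)).choose_spec θ

end ExponentialWeights

section ExponentialWeightsRun

variable {k N : ℕ} [NeZero k]

noncomputable def ewCounts (η : ℝ) (P : ℕ → Fin N → Finset (Fin k)) : ℕ → Fin N → ℕ
  | 0 => 0
  | r + 1 => recordChoice (ewCounts η P r) (P r) (ewPick η (ewCounts η P r) (P r))

noncomputable def ewChoice (η : ℝ) (P : ℕ → Fin N → Finset (Fin k)) (r : ℕ) : Fin k :=
  ewPick η (ewCounts η P r) (P r)

noncomputable def ewStrategy (η : ℝ) (l : List (Fin N → Finset (Fin k))) : Fin k :=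
  ewChoice η (fun r => l.getD r fun _ => ∅) (l.length - 1)

variable {η : ℝ} {P : ℕ → Fin N → Finset (Fin k)}

lemma ewCounts_succ (r : ℕ) :
    ewCounts η P (r + 1) = recordChoice (ewCounts η P r) (P r) (ewChoice η P r) := rfl

lemma ewCounts_monotone : Monotone (ewCounts η P) :=
  monotone_nat_of_le_succ fun r i => by simp [ewCounts_succ, recordChoice]

lemma ewCounts_apply (s : ℕ) (i : Fin N) :
    ewCounts η P s i = #{r ∈ range s | ewChoice η P r ∉ P r i} := by
  induction s with
  | zero => rfl
  | succ s ih =>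
    rw [ewCounts_succ, recordChoice, ih, range_add_one, filter_insert]
    split_ifs <;> simp [card_insert_of_notMem, *]

lemma ewChoice_congr {P' : ℕ → Fin N → Finset (Fin k)} {r : ℕ}
    (h : ∀ j ≤ r, P j = P' j) :
    ewChoice η P r = ewChoice η P' r := by
  suffices ∀ s ≤ r, ewCounts η P s = ewCounts η P' s by
    rw [ewChoice, ewChoice, this r le_rfl, h r le_rfl]
  intro s hs
  induction s with
  | zero => rfl
  | succ s ih =>
    rw [ewCounts_succ, ewCounts_succ, ewChoice, ewChoice, ih (by omega), h s (by omega)]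

end ExponentialWeightsRun

section ExponentialWeightsAnalysis

variable {k N : ℕ} [NeZero k] {η : ℝ} {P : ℕ → Fin N → Finset (Fin k)}

lemma sum_pow_rejectionWeight_ewChoice_le (hη : 0 ≤ η) {C s : ℕ}
    (hP : ∀ x : Fin k → Fin N, #{r ∈ range s | ∀ θ, θ ∉ P r (x θ)} ≤ C) :
    ∑ r ∈ range s, rejectionWeight η (ewCounts η P r) (P r) (ewChoice η P r) ^ k ≤
      C * potential η (ewCounts η P s) ^ k := by
  set G : (Fin k → Fin N) → ℝ := fun x => ∏ θ, exp (η * ewCounts η P s (x θ))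
  calc ∑ r ∈ range s, rejectionWeight η (ewCounts η P r) (P r) (ewChoice η P r) ^ k
      ≤ ∑ r ∈ range s, ∏ θ, rejectionWeight η (ewCounts η P r) (P r) θ := by
        gcongr with r
        rw [← Fin.prod_const k]
        exact prod_le_prod (fun _ _ => rejectionWeight_nonneg ..)
          fun θ _ => rejectionWeight_ewPick_le ..
    _ ≤ ∑ r ∈ range s, ∑ x ∈ Fintype.piFinset fun θ => {i | θ ∉ P r i}, G x := by
        gcongr with r hr x
        rw [prod_rejectionWeight]
        gcongr with x _ θ
        unfold G
        gcongr
        exact ewCounts_monotone (mem_range.1 hr).le _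
    _ = ∑ x, ∑ r ∈ range s with ∀ θ, θ ∉ P r (x θ), G x :=
        sum_comm' fun r x => by simp [Fintype.mem_piFinset]
    _ ≤ ∑ x, C * G x := by
        gcongr with x
        rw [sum_const, nsmul_eq_mul]
        gcongr
        exact_mod_cast hP x
    _ = C * potential η (ewCounts η P s) ^ k := by
        rw [← mul_sum, potential, Fintype.sum_pow]

theorem mul_ewCounts_le (hη : 0 ≤ η) {ε : ℝ} (hε : 0 < ε) (hN : 0 < N) {C T : ℕ}
    (hP : ∀ x : Fin k → Fin N, #{r ∈ range T | ∀ θ, θ ∉ P r (x θ)} ≤ C)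
    (hsmall : (exp η - 1) * C * (2 * exp η) ^ k ≤ ε ^ k * (log 2 / 2)) (i : Fin N) :
    η * ewCounts η P T i ≤ log N + 2 * (exp η - 1) * ε * T + log 2 := by
  set Φ := fun r => potential η (ewCounts η P r)
  set w := fun r => rejectionWeight η (ewCounts η P r) (P r) (ewChoice η P r)
  have hrec : PotentialRecursion Φ w (exp η - 1) :=
    ⟨by linarith [one_le_exp hη], fun _ => rejectionWeight_nonneg ..,
      fun _ => rejectionWeight_le_potential .., fun _ => potential_recordChoice ..⟩
  have hΦ0 : Φ 0 = N := potential_zero η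
  have hbudget (s : ℕ) (hs : s ≤ T) : ∑ r ∈ range s, w r ^ k ≤ C * Φ s ^ k :=
    sum_pow_rejectionWeight_ewChoice_le hη fun x =>
      (card_le_card (filter_subset_filter _ (range_subset_range.2 hs))).trans (hP x)
  have hΦ0pos : 0 < Φ 0 := by rw [hΦ0]; exact Nat.cast_pos.2 hN
  have hlog := hrec.log_div_le hΦ0pos hε hbudget (by rwa [add_sub_cancel])
  rw [log_div (hΦ0pos.trans_le (hrec.monotone (Nat.zero_le T))).ne' hΦ0pos.ne', hΦ0] at hlog
  calc η * ewCounts η P T i = log (exp (η * ewCounts η P T i)) := (log_exp _).symm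
    _ ≤ log (Φ T) := log_le_log (exp_pos _) (exp_le_potential ..)
    _ ≤ _ := by linarith

end ExponentialWeightsAnalysis

lemma card_filter_univ_fin_eq_card_filter_range {T : ℕ} (p : ℕ → Prop) [DecidablePred p] :
    #{r : Fin T | p r} = #{r ∈ range T | p r} := by
  rw [card_filter, card_filter, Fin.sum_univ_eq_sum_range (fun r => if p r then 1 else 0)]

section Play

variable {k N T : ℕ}

def profileSeq (S : Fin T → Fin N → Finset (Fin k)) (r : ℕ) : Fin N → Finset (Fin k) :=
  if h : r < T then S ⟨r, h⟩ else fun _ => ∅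

lemma profileSeq_apply (S : Fin T → Fin N → Finset (Fin k)) (r : Fin T) :
    profileSeq S r = S r := dif_pos r.isLt

lemma card_rejecting_rounds_le {S : Fin T → Fin N → Finset (Fin k)} {C : ℕ}
    (hS : conflictNumberLe S C) (x : Fin k → Fin N) :
    #{r ∈ range T | ∀ θ, θ ∉ profileSeq S r (x θ)} ≤ C := by
  rw [← card_filter_univ_fin_eq_card_filter_range]
  refine (card_le_card fun r => ?_).trans (hS (univ.image x) (card_image_le.trans (by simp)))
  simp only [mem_filter, mem_univ, true_and, profileSeq_apply, mem_image, not_exists]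
  exact fun hr θ hθ => hr θ (hθ (x θ) ⟨θ, rfl⟩)

variable [NeZero k] (η : ℝ) (S : Fin T → Fin N → Finset (Fin k))

lemma play_ewStrategy (r : Fin T) : play (ewStrategy η) S r = ewChoice η (profileSeq S) r := by
  rw [play, ewStrategy, List.length_ofFn, Nat.add_sub_cancel]
  refine ewChoice_congr fun j hj => ?_
  simp only [List.getD_eq_getElem?_getD, List.getElem?_ofFn, profileSeq,
    dif_pos (Nat.lt_succ_of_le hj), dif_pos (show j < T by omega)]
  rfl

lemma dissat_ewStrategy (i : Fin N) :
    dissat (ewStrategy η) S i = ewCounts η (profileSeq S) T i := by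
  rw [dissat, ewCounts_apply, ← card_filter_univ_fin_eq_card_filter_range]
  simp only [play_ewStrategy, profileSeq_apply]

end Play

lemma dissat_le {k N T : ℕ} (σ : List (Fin N → Finset (Fin k)) → Fin k)
    (S : Fin T → Fin N → Finset (Fin k)) (i : Fin N) : dissat σ S i ≤ T :=
  (card_filter_le _ _).trans_eq (card_fin T)

/-- `η = log N / B` and `ε = 42 B / T` make both `log N / η` and `ε T` of order `B`. -/
theorem dissat_ewStrategy_le {k N T C : ℕ} [NeZero k] {B : ℝ} (hN : 2 ≤ N) (hT : 0 < T)
    (hLB : log N ≤ B) (hB : C * log N * T ^ k ≤ B ^ (k + 1))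
    (S : Fin T → Fin N → Finset (Fin k)) (hS : conflictNumberLe S C) (i : Fin N) :
    dissat (ewStrategy (log N / B)) S i ≤ 170 * B := by
  set L := log N
  have hL : 0 < L := log_pos (by exact_mod_cast hN)
  have hB0 : 0 < B := hL.trans_le hLB
  have hT' : (0 : ℝ) < T := Nat.cast_pos.2 hT
  set η := L / B
  have hη0 : 0 < η := div_pos hL hB0
  have hη1 : η ≤ 1 := (div_le_one hB0).2 hLB
  have hηB : η * B = L := div_mul_cancel₀ _ hB0.ne'
  clear_value η
  set ε := 42 * B / T
  have hεT : ε * T = 42 * B := div_mul_cancel₀ _ hT'.ne'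
  have hγ0 : 0 ≤ exp η - 1 := by linarith [one_le_exp hη0.le]
  have hγ : exp η - 1 ≤ 2 * η := by
    have := (le_abs_self _).trans (abs_exp_sub_one_le (x := η) ?_)
    · rwa [abs_of_pos hη0] at this
    · rwa [abs_of_pos hη0]
  have hexp : exp η ≤ 3 := (exp_le_exp.2 hη1).trans exp_one_lt_three.le
  have hηC : η * C * T ^ k ≤ B ^ k := by
    refine le_of_mul_le_mul_right ?_ hB0
    calc η * C * T ^ k * B = C * L * T ^ k := by rw [← hηB]; ring
      _ ≤ B ^ k * B := by rwa [← pow_succ]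
  have h7 : 2 ≤ 7 ^ k * (log 2 / 2) := by
    nlinarith [le_self_pow₀ (by norm_num : (1 : ℝ) ≤ 7) (NeZero.ne k), log_two_gt_d9]
  have hsmall : (exp η - 1) * C * (2 * exp η) ^ k ≤ ε ^ k * (log 2 / 2) := by
    calc (exp η - 1) * C * (2 * exp η) ^ k ≤ 2 * η * C * 6 ^ k := by
          gcongr; linarith
      _ = 6 ^ k * (2 * (η * C * T ^ k)) / T ^ k := by field_simp
      _ ≤ 6 ^ k * (7 ^ k * (log 2 / 2) * B ^ k) / T ^ k := by
          gcongr
      _ = ε ^ k * (log 2 / 2) := by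
          rw [div_pow, mul_pow, show (42 : ℝ) = 6 * 7 by norm_num, mul_pow]; ring
  have hmain := mul_ewCounts_le hη0.le (by positivity) (by omega) (card_rejecting_rounds_le hS)
    hsmall i
  rw [dissat_ewStrategy]
  refine le_of_mul_le_mul_left ?_ hη0
  have hlog2 : log 2 ≤ L := log_le_log two_pos (by exact_mod_cast hN)
  calc η * ewCounts η (profileSeq S) T i ≤ L + 2 * (exp η - 1) * (ε * T) + log 2 := by
        linarith
    _ ≤ L + 2 * (2 * η) * (42 * B) + L := by
        rw [hεT]; gcongr
    _ = η * (170 * B) := by linear_combination (-2) * hηB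

lemma rpow_one_sub_inv_mul_rpow_inv_pow_succ {a b : ℝ} (ha : 0 ≤ a) (hb : 0 ≤ b) (n : ℕ) :
    (a ^ (1 - 1 / ((n : ℝ) + 1)) * b ^ (1 / ((n : ℝ) + 1))) ^ (n + 1) = a ^ n * b := by
  have hn : ((n : ℝ) + 1) ≠ 0 := by positivity
  rw [mul_pow, ← rpow_mul_natCast ha, ← rpow_mul_natCast hb, Nat.cast_add_one,
    show (1 - 1 / ((n : ℝ) + 1)) * (n + 1) = n by field_simp; ring,
    one_div_mul_cancel hn, rpow_one, rpow_natCast]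

lemma le_of_pow_mul_le_pow_succ {a b m : ℝ} {n : ℕ} (hb : 0 ≤ b) (hbm : b < m)
    (h : a ^ n * m ≤ b ^ (n + 1)) : a ≤ b := by
  by_contra! hba
  have : b ^ (n + 1) < a ^ n * m :=
    calc b ^ (n + 1) = b ^ n * b := pow_succ b n
      _ ≤ a ^ n * b := by gcongr
      _ < a ^ n * m := by have := pow_pos (hb.trans_lt hba) n; gcongr
  linarith

theorem exponential_weights_dissatisfaction_bound :
    ∃ c : ℝ, 0 < c ∧
      ∀ k N T C : ℕ, 1 ≤ k → 2 ≤ N → 1 ≤ T → 1 ≤ C →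
        ∃ σ : List (Fin N → Finset (Fin k)) → Fin k,
          ∀ S : Fin T → Fin N → Finset (Fin k), conflictNumberLe S C →
            ∀ i : Fin N,
              (dissat σ S i : ℝ) ≤
                c * (T : ℝ) ^ (1 - 1 / ((k : ℝ) + 1)) *
                  ((C : ℝ) * (k : ℝ) * Real.log N) ^ (1 / ((k : ℝ) + 1)) := by
  refine ⟨170, by norm_num, fun k N T C hk hN hT hC => ?_⟩
  have : NeZero k := ⟨by omega⟩
  set M := (C : ℝ) * k * log N
  set B := (T : ℝ) ^ (1 - 1 / ((k : ℝ) + 1)) * M ^ (1 / ((k : ℝ) + 1))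
  have hL : 0 < log N := log_pos (by exact_mod_cast hN)
  have hLM : log N ≤ M := le_mul_of_one_le_left hL.le (by norm_cast; nlinarith)
  have hB : B ^ (k + 1) = T ^ k * M :=
    rpow_one_sub_inv_mul_rpow_inv_pow_succ (Nat.cast_nonneg T) (hL.le.trans hLM) k
  simp_rw [mul_assoc (170 : ℝ)]
  by_cases hLB : log N ≤ B
  · refine ⟨ewStrategy (log N / B), fun S hS i => dissat_ewStrategy_le hN hT hLB ?_ S hS i⟩
    calc (C : ℝ) * log N * T ^ k ≤ C * log N * k * T ^ k := by
          gcongr ?_ * _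
          exact le_mul_of_one_le_right (by positivity) (by exact_mod_cast hk)
      _ = B ^ (k + 1) := by rw [hB]; ring
  -- otherwise `B < log N ≤ M`, so `T ≤ B` and any strategy will do
  have hTB : (T : ℝ) ≤ B :=
    le_of_pow_mul_le_pow_succ (by positivity) (not_le.1 hLB |>.trans_le hLM) hB.ge
  refine ⟨fun _ => 0, fun S _ i => ?_⟩
  calc (dissat _ S i : ℝ) ≤ T := by exact_mod_cast dissat_le _ S i
    _ ≤ 170 * B := by linarith [hTB.trans' (Nat.cast_nonneg T)]
end

section
/- For every k ≥ 1 and M ≥ 1, set N = k · M and T = M^k. Then for every Decision Maker strategy σ there exists an approval profile sequence S : Fin T → Fin N → Finset (Fin k) whose conflict number is at most 1, such that in the play of σ against S some agent has dissatisfaction at least M^(k-1)/k = T^((k-1)/k)/k. -/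
/-!
Split the `k * M` agents into `k` groups of `M`, group `θ` being responsible for option `θ`,
and let the `M ^ k` rounds run through all choices `x : Fin k → Fin M` of one agent per group.
In round `x`, agent `x θ` of group `θ` vetoes option `θ` and everybody else approves everything.
A set of agents is in conflict in round `x` only if it contains all `k` vetoers of `x`; having at
most `k` members, it then consists of exactly these vetoers, which determine `x`. So the conflict
number is at most one. On the other hand every chosen option is vetoed by someone, so the total
dissatisfaction is at least `M ^ k`, and some agent carries at least `M ^ k / (k * M)` of it.
-/

open Finset

section Dissatisfaction

variable {k N T : ℕ} (σ : List (Fin N → Finset (Fin k)) → Fin k)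
  (S : Fin T → Fin N → Finset (Fin k))

theorem sum_dissat_eq_sum_card :
    ∑ i, dissat σ S i = ∑ r, #{i | play σ S r ∉ S r i} := by
  simp only [dissat, card_filter]
  exact sum_comm

variable {σ S}

theorem le_sum_dissat (h : ∀ r, ∃ i, play σ S r ∉ S r i) : T ≤ ∑ i, dissat σ S i := by
  rw [sum_dissat_eq_sum_card]
  calc T = ∑ _r : Fin T, 1 := by simp
    _ ≤ _ := sum_le_sum fun r _ => card_pos.2 <| (h r).imp fun i hi => by simpa using hi

theorem exists_div_le_dissat (hN : 0 < N) (h : ∀ r, ∃ i, play σ S r ∉ S r i) :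
    ∃ i, (T : ℝ) / N ≤ dissat σ S i := by
  have hsum : ∑ _i : Fin N, (T : ℝ) / N ≤ ∑ i, (dissat σ S i : ℝ) := by
    rw [sum_const, card_univ, Fintype.card_fin, nsmul_eq_mul, mul_div_cancel₀ _ (by positivity)]
    exact_mod_cast le_sum_dissat h
  obtain ⟨i, -, hi⟩ := exists_le_of_sum_le ⟨⟨0, hN⟩, mem_univ _⟩ hsum
  exact ⟨i, hi⟩

end Dissatisfaction

section Veto

variable {k N T : ℕ}

def vetoProfile (vetoer : Fin T → Fin k → Fin N) : Fin T → Fin N → Finset (Fin k) :=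
  fun r i => {θ | vetoer r θ ≠ i}

variable {vetoer : Fin T → Fin k → Fin N}

@[simp]
theorem notMem_vetoProfile {r : Fin T} {i : Fin N} {θ : Fin k} :
    θ ∉ vetoProfile vetoer r i ↔ vetoer r θ = i := by
  simp [vetoProfile]

theorem exists_play_notMem_vetoProfile (σ : List (Fin N → Finset (Fin k)) → Fin k)
    (r : Fin T) :
    ∃ i, play σ (vetoProfile vetoer) r ∉ vetoProfile vetoer r i :=
  ⟨_, notMem_vetoProfile.2 rfl⟩

theorem image_vetoer_eq_of_conflict (group : Fin N → Fin k)
    (hgroup : ∀ r θ, group (vetoer r θ) = θ) {A : Finset (Fin N)} (hA : #A ≤ k) {r : Fin T}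
    (hr : ¬ ∃ θ, ∀ i ∈ A, θ ∈ vetoProfile vetoer r i) : univ.image (vetoer r) = A := by
  push Not at hr
  refine eq_of_subset_of_card_le (image_subset_iff.2 fun θ _ => ?_) ?_
  · obtain ⟨i, hiA, hi⟩ := hr θ
    exact notMem_vetoProfile.1 hi ▸ hiA
  · rw [card_image_of_injective _ fun θ θ' h => by rw [← hgroup r θ, h, hgroup], card_univ,
      Fintype.card_fin]
    exact hA

theorem conflictNumberLe_vetoProfile (group : Fin N → Fin k)
    (hgroup : ∀ r θ, group (vetoer r θ) = θ) (hinj : Function.Injective vetoer) :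
    conflictNumberLe (vetoProfile vetoer) 1 := by
  intro A hA
  refine card_le_one.2 fun r hr r' hr' => hinj <| funext fun θ => ?_
  have hmem : vetoer r' θ ∈ univ.image (vetoer r) := by
    rw [image_vetoer_eq_of_conflict group hgroup hA (mem_filter.1 hr).2,
      ← image_vetoer_eq_of_conflict group hgroup hA (mem_filter.1 hr').2]
    exact mem_image_of_mem _ (mem_univ θ)
  obtain ⟨θ', -, h⟩ := mem_image.1 hmem
  obtain rfl : θ' = θ := by rw [← hgroup r θ', h, hgroup]
  exact h

end Veto

def digitVetoer (k M : ℕ) (r : Fin (M ^ k)) (θ : Fin k) : Fin (k * M) :=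
  finProdFinEquiv (θ, finFunctionFinEquiv.symm r θ)

theorem digitVetoer_group {k M : ℕ} (r : Fin (M ^ k)) (θ : Fin k) :
    (finProdFinEquiv.symm (digitVetoer k M r θ)).1 = θ := by
  simp [digitVetoer]

theorem digitVetoer_injective (k M : ℕ) : Function.Injective (digitVetoer k M) := by
  intro r r' h
  apply finFunctionFinEquiv.symm.injective
  funext θ
  simpa [digitVetoer] using congrFun h θ

theorem one_conflict_lower_bound (k M : ℕ) (hk : 1 ≤ k) (hM : 1 ≤ M)
    (σ : List (Fin (k * M) → Finset (Fin k)) → Fin k) :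
    ∃ S : Fin (M ^ k) → Fin (k * M) → Finset (Fin k),
      conflictNumberLe S 1 ∧
      ∃ i : Fin (k * M),
        (M : ℝ) ^ (k - 1) / (k : ℝ) ≤ (dissat σ S i : ℝ) := by
  refine ⟨vetoProfile (digitVetoer k M),
    conflictNumberLe_vetoProfile (fun i => (finProdFinEquiv.symm i).1) digitVetoer_group
      (digitVetoer_injective k M), ?_⟩
  obtain ⟨i, hi⟩ := exists_div_le_dissat (Nat.mul_pos hk hM) (exists_play_notMem_vetoProfile σ)
  refine ⟨i, le_of_eq_of_le ?_ hi⟩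
  have hpow : (M : ℝ) ^ k = M ^ (k - 1) * M := by rw [← pow_succ, Nat.sub_add_cancel hk]
  rw [Nat.cast_pow, Nat.cast_mul, hpow, mul_div_mul_right _ _ (by positivity)]
end

section
/- For every T ≥ 1, set N = T and k = 2. For every compassionate Decision Maker strategy σ there exists an approval profile sequence S : Fin T → Fin N → Finset (Fin 2) whose conflict number is at most 1, such that in the play of σ against S some agent has dissatisfaction at least ⌊T/2⌋. -/
open Finset

/-- The dissatisfaction of agent `i` over the rounds `0, …, r - 1`
(i.e., strictly before round `r`) in the play of `σ` against `S`. -/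
def dissatUpTo {k N T : ℕ} (σ : List (Fin N → Finset (Fin k)) → Fin k)
    (S : Fin T → Fin N → Finset (Fin k)) (i : Fin N) (r : Fin T) : ℕ :=
  (Finset.univ.filter fun r' : Fin T => r'.val < r.val ∧ play σ S r' ∉ S r' i).card

/-- A strategy `σ` is compassionate (for plays with `T'` rounds): whenever in some
round `r` there is a unique agent `i` whose dissatisfaction so far is strictly greater
than that of every other agent, and `i` approves at least one option in round `r`,
the strategy chooses an option approved by `i`. -/
def Compassionate (T' : ℕ) {k N : ℕ} (σ : List (Fin N → Finset (Fin k)) → Fin k) : Prop :=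
  ∀ (S : Fin T' → Fin N → Finset (Fin k)) (r : Fin T') (i : Fin N),
    (∀ j : Fin N, j ≠ i → dissatUpTo σ S j r < dissatUpTo σ S i r) →
    S r i ≠ ∅ → play σ S r ∈ S r i

namespace CF

variable {T : ℕ} (σ : List (Fin T → Finset (Fin 2)) → Fin 2) (m : ℕ)

def tieProf (t : ℕ) : Fin T → Finset (Fin 2) := fun i =>
  if i.val = 2*t then {0} else if i.val = 2*t+1 then {1} else {0,1}

def proProf (t lo : ℕ) : Fin T → Finset (Fin 2) := fun i =>
  if i.val = lo then {0} else if 2*t+2 ≤ i.val ∧ i.val < 2*m then {1} else {0,1}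

def roundProf (n : ℕ) (h : List (Fin T → Finset (Fin 2))) : Fin T → Finset (Fin 2) :=
  if n < 2*m - 1 then
    if n % 2 = 0 then tieProf (n/2)
    else proProf m (n/2) (if σ h = 0 then n else n - 1)
  else fun _ => {0,1}

def hist : ℕ → List (Fin T → Finset (Fin 2))
  | 0 => []
  | n+1 => hist n ++ [roundProf σ m n (hist n)]

def prof (n : ℕ) : Fin T → Finset (Fin 2) := roundProf σ m n (hist σ m n)

def Sdef : Fin T → Fin T → Finset (Fin 2) := fun r => prof σ m r.val

def theta (n : ℕ) : Fin 2 := σ (hist σ m (n+1))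

def loser (t : ℕ) : ℕ := if theta σ m (2*t) = 0 then 2*t+1 else 2*t

lemma loser_spec (t : ℕ) : loser σ m t = 2*t ∨ loser σ m t = 2*t+1 := by
  unfold loser; split <;> simp

lemma hist_eq_ofFn : ∀ n, hist σ m n = List.ofFn (fun j : Fin n => prof σ m j.val)
  | 0 => by simp [hist]
  | n+1 => by
      rw [hist, List.ofFn_succ']
      simp [prof, List.concat_eq_append, hist_eq_ofFn n]

lemma play_eq (r : Fin T) : play σ (Sdef σ m) r = theta σ m r.val := by
  unfold play theta
  rw [hist_eq_ofFn]
  rfl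

lemma prof_filler {n : ℕ} (h : 2*m - 1 ≤ n) : prof σ m n = fun _ => {0,1} := by
  unfold prof roundProf
  rw [if_neg (by omega)]

lemma prof_tie {t : ℕ} (h : 2*t < 2*m - 1) : prof σ m (2*t) = tieProf t := by
  unfold prof roundProf
  rw [if_pos h, if_pos (by omega), Nat.mul_div_cancel_left t (by norm_num)]

lemma prof_pro {t : ℕ} (h : 2*t+1 < 2*m - 1) :
    prof σ m (2*t+1) = proProf m t (loser σ m t) := by
  unfold prof roundProf
  rw [if_pos h, if_neg (by omega)]
  have h2 : (2*t+1)/2 = t := by omega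
  rw [h2]
  have : σ (hist σ m (2*t+1)) = theta σ m (2*t) := rfl
  rw [this]
  unfold loser
  split <;> simp


lemma fin2_not0 (θ : Fin 2) : θ ∉ ({0} : Finset (Fin 2)) ↔ θ = 1 := by revert θ; decide
lemma fin2_not1 (θ : Fin 2) : θ ∉ ({1} : Finset (Fin 2)) ↔ θ = 0 := by revert θ; decide
lemma fin2_mem01 (θ : Fin 2) : θ ∈ ({0,1} : Finset (Fin 2)) := by revert θ; decide
lemma fin2_ne0 (θ : Fin 2) : θ ≠ 0 ↔ θ = 1 := by revert θ; decide

def Cc (j : Fin T) (n : ℕ) : ℕ :=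
  ((Finset.range n).filter (fun r => theta σ m r ∉ prof σ m r j)).card

lemma Cc_zero (j : Fin T) : Cc σ m j 0 = 0 := by simp [Cc]

lemma Cc_step (j : Fin T) (n : ℕ) :
    Cc σ m j (n+1) = Cc σ m j n + if theta σ m n ∉ prof σ m n j then 1 else 0 := by
  unfold Cc
  rw [Finset.range_add_one, Finset.filter_insert]
  split
  · rw [Finset.card_insert_of_notMem (by simp)]
  · simp

lemma dissatUpTo_eq (j : Fin T) (n : ℕ) (hn : n < T) :
    dissatUpTo σ (Sdef σ m) j ⟨n, hn⟩ = Cc σ m j n := by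
  unfold dissatUpTo Cc
  have hpred : ∀ r' ∈ (Finset.univ : Finset (Fin T)),
      ((r'.val < n ∧ play σ (Sdef σ m) r' ∉ Sdef σ m r' j) ↔
       (r'.val < n ∧ theta σ m r'.val ∉ prof σ m r'.val j)) := by
    intro r' _
    rw [play_eq]
    exact Iff.rfl
  rw [Finset.filter_congr hpred]
  refine Finset.card_bij' (fun r _ => r.val)
    (fun r hr => ⟨r, lt_trans (Finset.mem_range.mp (Finset.mem_filter.mp hr).1) hn⟩)
    ?_ ?_ ?_ ?_
  · intro a ha
    simp only [Finset.mem_filter, Finset.mem_univ, true_and] at ha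
    simp [Finset.mem_filter, Finset.mem_range, ha.1, ha.2]
  · intro b hb
    simp only [Finset.mem_filter, Finset.mem_range] at hb
    simp [hb.1, hb.2]
  · intro a _; rfl
  · intro b _; rfl

lemma badTie {s : ℕ} (hs : 2*s < 2*m - 1) (j : Fin T) :
    theta σ m (2*s) ∉ prof σ m (2*s) j ↔ j.val = loser σ m s := by
  rw [prof_tie σ m hs]
  unfold tieProf loser
  by_cases hθ : theta σ m (2*s) = 0
  · rw [if_pos hθ, hθ]
    split_ifs with h1 h2 <;>
      simp only [fin2_not0, fin2_not1, fin2_mem01, not_true, iff_true, iff_false,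
        false_iff, true_iff] <;>
      first
        | omega
        | (constructor
           · intro hh; exact absurd hh (by decide)
           · intro hh; omega)
  · have hθ1 : theta σ m (2*s) = 1 := (fin2_ne0 _).mp hθ
    rw [if_neg hθ, hθ1]
    split_ifs with h1 h2 <;>
      simp only [fin2_not0, fin2_not1, fin2_mem01, not_true, iff_true, iff_false,
        false_iff, true_iff] <;>
      first
        | omega
        | (constructor
           · intro hh; exact absurd hh (by decide)
           · intro hh; omega)

lemma badPro {s : ℕ} (hs : 2*s+1 < 2*m - 1) (hθ : theta σ m (2*s+1) = 0) (j : Fin T) :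
    theta σ m (2*s+1) ∉ prof σ m (2*s+1) j ↔ (2*s+2 ≤ j.val ∧ j.val < 2*m) := by
  rw [prof_pro σ m hs, hθ]
  unfold proProf
  have hl := loser_spec σ m s
  split_ifs with h1 h2 <;>
    simp only [fin2_not0, fin2_not1, fin2_mem01, not_true, iff_true, iff_false,
      false_iff, true_iff]
  · omega
  · exact h2
  · exact h2

lemma badFill {n : ℕ} (h : 2*m - 1 ≤ n) (j : Fin T) :
    ¬ (theta σ m n ∉ prof σ m n j) := by
  rw [prof_filler σ m h]
  exact not_not_intro (fin2_mem01 _)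


def Gst (t : ℕ) : Prop := ∀ j : Fin T,
  (j.val = loser σ m t → Cc σ m j (2*t+1) = t+1) ∧
  (2*t+2 ≤ j.val → j.val < 2*m → Cc σ m j (2*t+1) = t) ∧
  (j.val ≠ loser σ m t → Cc σ m j (2*t+1) ≤ t)

lemma comp_step (hC : Compassionate T σ) (hTm : 2*m ≤ T) (t : ℕ) (ht : t+1 < m)
    (hG : Gst σ m t) : theta σ m (2*t+1) = 0 := by
  have hr : 2*t+1 < T := by omega
  have hls := loser_spec σ m t
  have hlo : loser σ m t < T := by omega
  set i : Fin T := ⟨loser σ m t, hlo⟩ with hi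
  have hset : Sdef σ m ⟨2*t+1, hr⟩ i = {0} := by
    show prof σ m (2*t+1) i = {0}
    rw [prof_pro σ m (by omega)]
    unfold proProf
    rw [if_pos rfl]
  have h1 : ∀ jj : Fin T, jj ≠ i →
      dissatUpTo σ (Sdef σ m) jj ⟨2*t+1, hr⟩ < dissatUpTo σ (Sdef σ m) i ⟨2*t+1, hr⟩ := by
    intro jj hjj
    rw [dissatUpTo_eq, dissatUpTo_eq]
    have hji : jj.val ≠ loser σ m t := by
      intro hv
      exact hjj (Fin.ext hv)
    have ha := (hG jj).2.2 hji
    have hb := (hG i).1 rfl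
    omega
  have h3 := hC (Sdef σ m) ⟨2*t+1, hr⟩ i h1 (by rw [hset]; simp)
  rw [play_eq, hset] at h3
  simpa using h3

lemma Gmain (hC : Compassionate T σ) (hTm : 2*m ≤ T) : ∀ t, t < m → Gst σ m t := by
  intro t
  induction t with
  | zero =>
    intro h0 j
    have hc := Cc_step σ m j 0
    rw [Cc_zero, Nat.zero_add] at hc
    have hb := badTie σ m (s := 0) (by omega) j
    have hls := loser_spec σ m 0
    simp only [Nat.mul_zero, Nat.zero_add] at hb hls hc ⊢
    refine ⟨?_, ?_, ?_⟩
    · intro hj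
      rw [if_pos (hb.mpr hj)] at hc
      exact hc
    · intro h1 h2
      rw [if_neg (by rw [hb]; omega)] at hc
      exact hc
    · intro hj
      rw [if_neg (by rw [hb]; exact hj)] at hc
      omega
  | succ t ih =>
    intro ht1
    have hGt := ih (by omega)
    have hθ := comp_step σ m hC hTm t (by omega) hGt
    intro j
    have e1 := Cc_step σ m j (2*t+1)
    have e2 := Cc_step σ m j (2*t+2)
    rw [show 2*t+1+1 = 2*t+2 from rfl] at e1
    have hbP := badPro σ m (s := t) (by omega) hθ j
    have hbT := badTie σ m (s := t+1) (by omega) j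
    have eidx : 2*(t+1) = 2*t+2 := by ring
    rw [eidx] at hbT
    have hls := loser_spec σ m t
    have hls1 := loser_spec σ m (t+1)
    rw [eidx] at hls1
    have goalidx : 2*(t+1)+1 = 2*t+2+1 := by ring
    refine ⟨?_, ?_, ?_⟩ <;> rw [goalidx]
    · intro hj
      have hrange : 2*t+2 ≤ j.val ∧ j.val < 2*m := by omega
      have c1 := (hGt j).2.1 hrange.1 hrange.2
      rw [if_pos (hbP.mpr hrange)] at e1
      rw [if_pos (hbT.mpr hj)] at e2
      omega
    · intro hge hlt
      have c1 := (hGt j).2.1 (by omega) (by omega)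
      rw [if_pos (hbP.mpr ⟨by omega, hlt⟩)] at e1
      rw [if_neg (by rw [hbT]; rw [eidx] at hge; omega)] at e2
      omega
    · intro hj
      rw [if_neg (by rw [hbT]; exact hj)] at e2
      by_cases hrc : 2*t+2 ≤ j.val ∧ j.val < 2*m
      · have c1 := (hGt j).2.1 hrc.1 hrc.2
        rw [if_pos (hbP.mpr hrc)] at e1
        norm_num at e1 e2 c1 ⊢
        omega
      · rw [if_neg (by rw [hbP]; exact hrc)] at e1
        by_cases hjl : j.val = loser σ m t
        · have c1 := (hGt j).1 hjl
          norm_num at e1 e2 c1 ⊢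
          omega
        · have c1 := (hGt j).2.2 hjl
          norm_num at e1 e2 ⊢
          omega

lemma dissat_eq (hTm : 2*m ≤ T) (j : Fin T) :
    dissat σ (Sdef σ m) j = Cc σ m j (2*m-1) := by
  unfold dissat Cc
  have hpred : ∀ r' ∈ (Finset.univ : Finset (Fin T)),
      ((play σ (Sdef σ m) r' ∉ Sdef σ m r' j) ↔
       (r'.val < 2*m-1 ∧ theta σ m r'.val ∉ prof σ m r'.val j)) := by
    intro r' _
    rw [play_eq]
    constructor
    · intro hbad
      refine ⟨?_, hbad⟩
      by_contra hge
      exact badFill σ m (by omega) j hbad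
    · exact fun h => h.2
  rw [Finset.filter_congr hpred]
  refine Finset.card_bij' (fun r _ => r.val)
    (fun r hr => ⟨r, lt_of_lt_of_le (Finset.mem_range.mp (Finset.mem_filter.mp hr).1)
      (by omega)⟩)
    ?_ ?_ ?_ ?_
  · intro a ha
    simp only [Finset.mem_filter, Finset.mem_univ, true_and] at ha
    simp [Finset.mem_filter, Finset.mem_range, ha.1, ha.2]
  · intro b hb
    simp only [Finset.mem_filter, Finset.mem_range] at hb
    simp [hb.1, hb.2]
  · intro a _; rfl
  · intro b _; rfl

lemma tie_not0 (t : ℕ) (i : Fin T) : (0:Fin 2) ∉ tieProf t i ↔ i.val = 2*t+1 := by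
  unfold tieProf
  split_ifs with h1 h2 <;> simp <;> omega

lemma tie_not1 (t : ℕ) (i : Fin T) : (1:Fin 2) ∉ tieProf t i ↔ i.val = 2*t := by
  unfold tieProf
  split_ifs with h1 h2 <;> simp <;> omega

lemma pro_not0 {t lo : ℕ} (hlo : lo ≤ 2*t+1) (i : Fin T) :
    (0:Fin 2) ∉ proProf m t lo i ↔ 2*t+2 ≤ i.val ∧ i.val < 2*m := by
  unfold proProf
  split_ifs with h1 h2 <;> simp <;> omega

lemma pro_not1 {t lo : ℕ} (i : Fin T) :
    (1:Fin 2) ∉ proProf m t lo i ↔ i.val = lo := by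
  unfold proProf
  split_ifs with h1 h2 <;> simp <;> omega

lemma shapeOf (r : Fin T) {a b : Fin T}
    (ha0 : (0:Fin 2) ∉ Sdef σ m r a) (hb1 : (1:Fin 2) ∉ Sdef σ m r b) :
    ∃ t, (r.val = 2*t ∧ a.val = 2*t+1 ∧ b.val = 2*t) ∨
         (r.val = 2*t+1 ∧ (2*t+2 ≤ a.val ∧ a.val < 2*m) ∧ b.val = loser σ m t) := by
  have hr : r.val < 2*m-1 := by
    by_contra h
    have : (0:Fin 2) ∉ prof σ m r.val a := ha0
    rw [prof_filler σ m (by omega)] at this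
    exact this (fin2_mem01 _)
  obtain ⟨t, ht⟩ : ∃ t, r.val = 2*t ∨ r.val = 2*t+1 := ⟨r.val/2, by omega⟩
  refine ⟨t, ?_⟩
  rcases ht with ht | ht
  · left
    have h0 : (0:Fin 2) ∉ prof σ m (2*t) a := by rw [← ht]; exact ha0
    have h1 : (1:Fin 2) ∉ prof σ m (2*t) b := by rw [← ht]; exact hb1
    rw [prof_tie σ m (by omega)] at h0 h1
    exact ⟨ht, (tie_not0 t a).mp h0, (tie_not1 t b).mp h1⟩
  · right
    have h0 : (0:Fin 2) ∉ prof σ m (2*t+1) a := by rw [← ht]; exact ha0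
    have h1 : (1:Fin 2) ∉ prof σ m (2*t+1) b := by rw [← ht]; exact hb1
    rw [prof_pro σ m (by omega)] at h0 h1
    have hls := loser_spec σ m t
    exact ⟨ht, (pro_not0 m (by omega) a).mp h0, (pro_not1 m b).mp h1⟩

lemma mem_two {α : Type*} [DecidableEq α] {A : Finset α} (hA : A.card ≤ 2) {a b c : α}
    (ha : a ∈ A) (hb : b ∈ A) (hc : c ∈ A) (hab : a ≠ b) : c = a ∨ c = b := by
  by_contra hcon
  push_neg at hcon
  have hsub : ({c, a, b} : Finset α) ⊆ A := by
    intro x hx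
    simp only [Finset.mem_insert, Finset.mem_singleton] at hx
    rcases hx with rfl | rfl | rfl <;> assumption
  have h3 : ({c, a, b} : Finset α).card = 3 := by
    rw [Finset.card_insert_of_notMem (by simp [hcon.1, hcon.2]),
      Finset.card_insert_of_notMem (by simp [hab]), Finset.card_singleton]
  have := Finset.card_le_card hsub
  omega

lemma conflict_le_one (hTm : 2*m ≤ T) : conflictNumberLe (Sdef σ m) 1 := by
  intro A hA
  rw [Finset.card_le_one]
  intro r hr r' hr'
  simp only [Finset.mem_filter, Finset.mem_univ, true_and] at hr hr'
  obtain ⟨a, haA, ha0⟩ : ∃ a ∈ A, (0:Fin 2) ∉ Sdef σ m r a := by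
    by_contra h; push_neg at h; exact hr ⟨0, h⟩
  obtain ⟨b, hbA, hb1⟩ : ∃ b ∈ A, (1:Fin 2) ∉ Sdef σ m r b := by
    by_contra h; push_neg at h; exact hr ⟨1, h⟩
  obtain ⟨a', haA', ha0'⟩ : ∃ a ∈ A, (0:Fin 2) ∉ Sdef σ m r' a := by
    by_contra h; push_neg at h; exact hr' ⟨0, h⟩
  obtain ⟨b', hbA', hb1'⟩ : ∃ b ∈ A, (1:Fin 2) ∉ Sdef σ m r' b := by
    by_contra h; push_neg at h; exact hr' ⟨1, h⟩
  obtain ⟨t, hsh⟩ := shapeOf σ m r ha0 hb1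
  obtain ⟨t', hsh'⟩ := shapeOf σ m r' ha0' hb1'
  have hls := loser_spec σ m t
  have hls' := loser_spec σ m t'
  have hab : a ≠ b := by
    intro hE
    rw [hE] at hsh
    rcases hsh with ⟨_, h1, h2⟩ | ⟨_, h1, h2⟩ <;> omega
  have hma := mem_two hA haA hbA haA' hab
  have hmb := mem_two hA haA hbA hbA' hab
  apply Fin.ext
  have hva : a'.val = a.val ∨ a'.val = b.val := by
    rcases hma with h | h <;> rw [h] <;> simp
  have hvb : b'.val = a.val ∨ b'.val = b.val := by
    rcases hmb with h | h <;> rw [h] <;> simp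
  rcases hsh with ⟨e1, e2, e3⟩ | ⟨e1, e2, e3⟩ <;>
    rcases hsh' with ⟨f1, f2, f3⟩ | ⟨f1, f2, f3⟩ <;>
    rcases hva with g1 | g1 <;> rcases hvb with g2 | g2 <;>
    rcases hls with l1 | l1 <;> rcases hls' with l2 | l2 <;>
    omega

end CF


theorem compassionate_fails (T : ℕ) (hT : 1 ≤ T)
    (σ : List (Fin T → Finset (Fin 2)) → Fin 2)
    (hσ : Compassionate T σ) :
    ∃ S : Fin T → Fin T → Finset (Fin 2),
      conflictNumberLe S 1 ∧ ∃ i : Fin T, T / 2 ≤ dissat σ S i := by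
  set m := T / 2 with hm
  have hTm : 2*m ≤ T := by omega
  refine ⟨CF.Sdef σ m, CF.conflict_le_one σ m hTm, ?_⟩
  rcases Nat.eq_zero_or_pos m with hm0 | hm1
  · exact ⟨⟨0, hT⟩, by omega⟩
  · set t0 := m - 1 with ht0def
    have ht0 : t0 < m := by omega
    have hG := CF.Gmain σ m hσ hTm t0 ht0
    have hls := CF.loser_spec σ m t0
    have hlt : CF.loser σ m t0 < T := by omega
    refine ⟨⟨CF.loser σ m t0, hlt⟩, ?_⟩
    have hc := (hG ⟨CF.loser σ m t0, hlt⟩).1 rfl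
    rw [CF.dissat_eq σ m hTm]
    have hidx : 2*t0+1 = 2*m-1 := by omega
    rw [← hidx]
    omega
end

section
/- Let k ≥ 1, N ≥ k, and C ≤ T. Define the approval profile sequence S : Fin T → Fin N → Finset (Fin k) as follows: in each of the first C rounds, agent j (for j ∈ {0, …, k−1}) approves all options except option j, and every agent i ≥ k approves all options; in every round after the first C rounds, every agent approves all options. Then S has conflict number at most C, and for every Decision Maker strategy σ, in the play of σ against S some agent has dissatisfaction at least C/k. -/
open Finset

theorem linear_conflict_lower_bound (k N T C : ℕ) (hk : 1 ≤ k) (hkN : k ≤ N) (hCT : C ≤ T)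
    (S : Fin T → Fin N → Finset (Fin k))
    (hS : ∀ (r : Fin T) (i : Fin N),
      S r i = if h : r.val < C ∧ i.val < k
        then Finset.univ \ {(⟨i.val, h.2⟩ : Fin k)}
        else Finset.univ) :
    conflictNumberLe S C ∧
    ∀ σ : List (Fin N → Finset (Fin k)) → Fin k,
      ∃ i : Fin N, (C : ℝ) / (k : ℝ) ≤ (dissat σ S i : ℝ) := by
  have hCcard : (Finset.univ.filter fun r : Fin T => r.val < C).card = C := by
    rw [← Finset.card_range C]
    apply Finset.card_bij (fun r _ => r.val)
    · intro r hr; simp only [mem_filter, mem_univ, true_and] at hr; simpa using hr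
    · intro a _ b _ h; exact Fin.ext h
    · intro b hb
      simp only [Finset.mem_range] at hb
      exact ⟨⟨b, lt_of_lt_of_le hb hCT⟩, by simp [hb], rfl⟩
  constructor
  · intro A hA
    have hsub : (Finset.univ.filter fun r : Fin T => ¬ ∃ θ : Fin k, ∀ i ∈ A, θ ∈ S r i)
        ⊆ Finset.univ.filter fun r : Fin T => r.val < C := by
      intro r hr
      simp only [mem_filter, mem_univ, true_and] at hr ⊢
      by_contra h
      push_neg at h
      apply hr
      refine ⟨⟨0, hk⟩, fun i _ => ?_⟩
      rw [hS, dif_neg]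
      · exact mem_univ _
      · intro hc; exact absurd hc.1 (not_lt.mpr h)
    calc _ ≤ (Finset.univ.filter fun r : Fin T => r.val < C).card :=
            Finset.card_le_card hsub
      _ = C := hCcard
  · intro σ
    have key : C ≤ ∑ j : Fin k, dissat σ S (Fin.castLE hkN j) := by
      have hdecomp : (Finset.univ.filter fun r : Fin T => r.val < C) ⊆
          Finset.univ.biUnion (fun j : Fin k =>
            Finset.univ.filter fun r : Fin T => play σ S r ∉ S r (Fin.castLE hkN j)) := by
        intro r hr
        simp only [mem_filter, mem_univ, true_and] at hr
        rw [Finset.mem_biUnion]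
        refine ⟨play σ S r, mem_univ _, ?_⟩
        simp only [mem_filter, mem_univ, true_and]
        rw [hS, dif_pos ⟨hr, (play σ S r).isLt⟩]
        simp [Fin.ext_iff]
      calc C = (Finset.univ.filter fun r : Fin T => r.val < C).card := hCcard.symm
        _ ≤ (Finset.univ.biUnion (fun j : Fin k =>
              Finset.univ.filter fun r : Fin T =>
                play σ S r ∉ S r (Fin.castLE hkN j))).card := Finset.card_le_card hdecomp
        _ ≤ ∑ j : Fin k, dissat σ S (Fin.castLE hkN j) := Finset.card_biUnion_le
    by_contra h
    push_neg at h
    have hk0 : (0:ℝ) < (k:ℝ) := by exact_mod_cast hk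
    have hsum : (∑ j : Fin k, (dissat σ S (Fin.castLE hkN j) : ℝ)) < (k:ℝ) * ((C:ℝ)/(k:ℝ)) := by
      calc (∑ j : Fin k, (dissat σ S (Fin.castLE hkN j) : ℝ))
          < ∑ _j : Fin k, (C:ℝ)/(k:ℝ) :=
            Finset.sum_lt_sum_of_nonempty ⟨⟨0, hk⟩, mem_univ _⟩ (fun j _ => h _)
        _ = (k:ℝ) * ((C:ℝ)/(k:ℝ)) := by
            simp [Finset.sum_const, mul_comm]
    have heq : (k:ℝ) * ((C:ℝ)/(k:ℝ)) = C := by field_simp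
    have hkey : (C:ℝ) ≤ ∑ j : Fin k, (dissat σ S (Fin.castLE hkN j) : ℝ) := by
      exact_mod_cast key
    linarith
end

section
/- Let ε > 0, N ≥ 1, T ≥ 1, and let A_1, …, A_T ⊆ Fin N. For each round r ∈ {1, …, T} define weights w_r(i) = (1+ε)^(#{r' < r : i ∈ A_{r'}}), the total weight W_r = ∑_{i} w_r(i), and δ_r = (∑_{i ∈ A_r} w_r(i)) / W_r. Then for every agent i, (1+ε)^(#{r : i ∈ A_r}) ≤ N · ∏_{r=1}^{T} (1 + ε δ_r). -/
open Finset

theorem exponential_weights_potential (ε : ℝ) (hε : 0 < ε) (N T : ℕ)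
    (hN : 1 ≤ N) (hT : 1 ≤ T)
    (A : Fin T → Finset (Fin N))
    (w : Fin T → Fin N → ℝ) (δ : Fin T → ℝ)
    (hw : ∀ (r : Fin T) (i : Fin N),
      w r i = (1 + ε) ^ ((Finset.univ.filter fun r' : Fin T => r'.val < r.val ∧ i ∈ A r').card))
    (hδ : ∀ r : Fin T, δ r = (∑ i ∈ A r, w r i) / (∑ i : Fin N, w r i)) :
    ∀ i : Fin N,
      (1 + ε) ^ ((Finset.univ.filter fun r : Fin T => i ∈ A r).card) ≤
        (N : ℝ) * ∏ r : Fin T, (1 + ε * δ r) := by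
  have h1 : (0:ℝ) < 1 + ε := by linarith
  set c : ℕ → Fin N → ℕ :=
    fun t j => (Finset.univ.filter fun r' : Fin T => r'.val < t ∧ j ∈ A r').card with hc
  set Φ : ℕ → ℝ := fun t => ∑ j : Fin N, (1+ε) ^ (c t j) with hΦ
  have hne : (Finset.univ : Finset (Fin N)).Nonempty :=
    Finset.univ_nonempty_iff.mpr ⟨⟨0, hN⟩⟩
  have hΦpos : ∀ t, 0 < Φ t := by
    intro t
    exact Finset.sum_pos (fun j _ => pow_pos h1 _) hne
  have hkey : ∀ t, t ≤ T →
      Φ t = N * ∏ r ∈ Finset.univ.filter (fun r : Fin T => r.val < t), (1 + ε * δ r) := by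
    intro t ht
    induction t with
    | zero => simp [hΦ, hc]
    | succ t ih =>
      have ht' : t < T := ht
      have ihh := ih (le_of_lt ht')
      set r : Fin T := ⟨t, ht'⟩ with hr
      have hrold : r ∉ Finset.univ.filter (fun r' : Fin T => r'.val < t) := by
        simp [hr]
      have hfilter : (Finset.univ.filter (fun r' : Fin T => r'.val < t+1)) =
          insert r (Finset.univ.filter (fun r' : Fin T => r'.val < t)) := by
        ext x
        simp only [mem_insert, mem_filter, mem_univ, true_and, Nat.lt_succ_iff_lt_or_eq]
        constructor
        · rintro (h | h)
          · exact Or.inr h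
          · exact Or.inl (Fin.ext h)
        · rintro (h | h)
          · subst h; exact Or.inr rfl
          · exact Or.inl h
      have hcsucc : ∀ j, c (t+1) j = c t j + (if j ∈ A r then 1 else 0) := by
        intro j
        by_cases hj : j ∈ A r
        · simp only [hj, if_true, hc]
          have heq : (Finset.univ.filter fun r' : Fin T => r'.val < t+1 ∧ j ∈ A r') =
              insert r (Finset.univ.filter fun r' : Fin T => r'.val < t ∧ j ∈ A r') := by
            ext x
            simp only [mem_insert, mem_filter, mem_univ, true_and, Nat.lt_succ_iff_lt_or_eq]
            constructor
            · rintro ⟨h | h, hA⟩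
              · exact Or.inr ⟨h, hA⟩
              · exact Or.inl (Fin.ext h)
            · rintro (h | ⟨h, hA⟩)
              · subst h; exact ⟨Or.inr rfl, hj⟩
              · exact ⟨Or.inl h, hA⟩
          have hnotmem : r ∉ (Finset.univ.filter fun r' : Fin T => r'.val < t ∧ j ∈ A r') := by
            simp [hr]
          rw [heq, Finset.card_insert_of_notMem hnotmem]
        · simp only [hj, if_false, hc, add_zero]
          congr 1
          ext x
          simp only [mem_filter, mem_univ, true_and, Nat.lt_succ_iff_lt_or_eq]
          constructor
          · rintro ⟨h | h, hA⟩
            · exact ⟨h, hA⟩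
            · exact absurd hA (by rwa [show x = r from Fin.ext h])
          · rintro ⟨h, hA⟩
            exact ⟨Or.inl h, hA⟩
      have hwr : ∀ j, w r j = (1+ε) ^ (c t j) := by
        intro j; rw [hw]
      have hΦr : Φ t = ∑ j : Fin N, w r j := by
        simp [hΦ, hwr]
      have hWne : (∑ j : Fin N, w r j) ≠ 0 := by
        rw [← hΦr]; exact ne_of_gt (hΦpos t)
      have hS : (∑ j ∈ A r, w r j) = δ r * Φ t := by
        rw [hδ r, hΦr, div_mul_cancel₀ _ hWne]
      have hstep : Φ (t+1) = Φ t * (1 + ε * δ r) := by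
        have : Φ (t+1) = ∑ j : Fin N, ((1+ε) ^ (c t j) + if j ∈ A r then ε * (1+ε) ^ (c t j) else 0) := by
          simp only [hΦ]
          refine Finset.sum_congr rfl (fun j _ => ?_)
          rw [hcsucc j]
          by_cases hj : j ∈ A r <;> simp [hj, pow_add] <;> ring
        rw [this, Finset.sum_add_distrib, Finset.sum_ite_mem]
        have huniv : Finset.univ ∩ A r = A r := Finset.univ_inter _
        rw [huniv, ← Finset.mul_sum]
        have : (∑ j ∈ A r, (1+ε) ^ (c t j)) = δ r * Φ t := by
          rw [← hS]
          exact Finset.sum_congr rfl (fun j _ => (hwr j).symm)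
        rw [this]
        simp only [hΦ]
        ring
      rw [hstep, ihh, hfilter, Finset.prod_insert hrold]
      ring
  intro i
  have hfinal := hkey T le_rfl
  have huniv : (Finset.univ.filter (fun r : Fin T => r.val < T)) = Finset.univ := by
    ext x; simp [x.isLt]
  rw [huniv] at hfinal
  have hci : c T i = (Finset.univ.filter fun r : Fin T => i ∈ A r).card := by
    simp only [hc]
    congr 1
    ext x; simp [x.isLt]
  calc (1 + ε) ^ ((Finset.univ.filter fun r : Fin T => i ∈ A r).card)
      = (1+ε) ^ (c T i) := by rw [hci]
    _ ≤ Φ T := Finset.single_le_sum (fun j _ => le_of_lt (pow_pos h1 _)) (Finset.mem_univ i)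
    _ = N * ∏ r : Fin T, (1 + ε * δ r) := hfinal
end

section
/- Let X be a finite set, let α > 1, let C ≥ 1 and T ≥ 1, and let P_1, …, P_T be probability mass functions on X such that for every r ∈ {1, …, T−1} and every x ∈ X, P_r(x) ≤ α · P_{r+1}(x) and P_{r+1}(x) ≤ α · P_r(x). Let 𝒞_1, …, 𝒞_T ⊆ X be sets such that every x ∈ X belongs to at most C of the sets 𝒞_1, …, 𝒞_T. Then ∑_{r=1}^{T} P_r(𝒞_r) ≤ e · C · (T · Real.log α + 1). -/
open Finset

theorem slowly_changing_pmf_conflict_bound {X : Type*} [Fintype X] [DecidableEq X]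
    (α : ℝ) (hα : 1 < α) (C T : ℕ) (hC : 1 ≤ C) (hT : 1 ≤ T)
    (P : Fin T → X → ℝ)
    (hP0 : ∀ (r : Fin T) (x : X), 0 ≤ P r x)
    (hP1 : ∀ r : Fin T, ∑ x : X, P r x = 1)
    (hchange : ∀ (r : Fin T) (h : r.val + 1 < T) (x : X),
      P r x ≤ α * P ⟨r.val + 1, h⟩ x ∧ P ⟨r.val + 1, h⟩ x ≤ α * P r x)
    (𝒞 : Fin T → Finset X)
    (h𝒞 : ∀ x : X, (Finset.univ.filter fun r : Fin T => x ∈ 𝒞 r).card ≤ C) :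
    ∑ r : Fin T, ∑ x ∈ 𝒞 r, P r x ≤ Real.exp 1 * C * ((T : ℝ) * Real.log α + 1) := by
  have hlog : 0 < Real.log α := Real.log_pos hα
  have hαpos : (0:ℝ) < α := lt_trans one_pos hα
  set ℓ : ℕ := ⌈1 / Real.log α⌉₊ with hℓdef
  have hℓpos : 0 < ℓ := Nat.ceil_pos.mpr (by positivity)
  have hℓge : 1 / Real.log α ≤ (ℓ : ℝ) := Nat.le_ceil _
  -- chain lemma
  have chain : ∀ (a : Fin T) (d : ℕ) (r : Fin T), r.val = a.val + d → ∀ x,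
      P r x ≤ α ^ d * P a x := by
    intro a d
    induction d with
    | zero =>
      intro r hr x
      have : r = a := Fin.ext (by omega)
      subst this; simp
    | succ n ih =>
      intro r hr x
      have hrT := r.isLt
      have hlt : a.val + n < T := by omega
      set r' : Fin T := ⟨a.val + n, hlt⟩ with hr'
      have h1 : r'.val + 1 < T := by simp [hr']; omega
      have hre : r = ⟨r'.val + 1, h1⟩ := Fin.ext (by simp [hr']; omega)
      have hstep := (hchange r' h1 x).2
      calc P r x = P ⟨r'.val + 1, h1⟩ x := by rw [hre]
        _ ≤ α * P r' x := hstep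
        _ ≤ α * (α ^ n * P a x) :=
            mul_le_mul_of_nonneg_left (ih r' rfl x) (le_of_lt hαpos)
        _ = α ^ (n + 1) * P a x := by ring
  set k : ℕ := (T - 1) / ℓ + 1 with hkdef
  have hmaps : ∀ r : Fin T, r.val / ℓ ∈ Finset.range k := by
    intro r
    have := r.isLt
    have h1 : r.val ≤ T - 1 := by omega
    have h2 : r.val / ℓ ≤ (T - 1) / ℓ := Nat.div_le_div_right h1
    simp [hkdef]; omega
  have hsplit : ∑ b ∈ Finset.range k,
      ∑ r ∈ Finset.univ.filter (fun r : Fin T => r.val / ℓ = b), ∑ x ∈ 𝒞 r, P r x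
      = ∑ r : Fin T, ∑ x ∈ 𝒞 r, P r x :=
    Finset.sum_fiberwise_of_maps_to (fun r _ => hmaps r) _
  -- bound on each block
  have hblock : ∀ b ∈ Finset.range k,
      ∑ r ∈ Finset.univ.filter (fun r : Fin T => r.val / ℓ = b), ∑ x ∈ 𝒞 r, P r x
      ≤ Real.exp 1 * C := by
    intro b hb
    simp only [Finset.mem_range, hkdef] at hb
    have hbT : b * ℓ < T := by
      have h1 : b ≤ (T - 1) / ℓ := by omega
      have h2 : b * ℓ ≤ (T - 1) / ℓ * ℓ := Nat.mul_le_mul_right ℓ h1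
      have h3 : (T - 1) / ℓ * ℓ ≤ T - 1 := Nat.div_mul_le_self _ _
      omega
    set a : Fin T := ⟨b * ℓ, hbT⟩ with ha
    set S := Finset.univ.filter (fun r : Fin T => r.val / ℓ = b) with hS
    -- pointwise bound on the block
    have hpt : ∀ r ∈ S, ∀ x : X, P r x ≤ Real.exp 1 * P a x := by
      intro r hr x
      have hrb : r.val / ℓ = b := by
        simp only [hS, Finset.mem_filter] at hr
        exact hr.2
      have hmod := Nat.div_add_mod r.val ℓ
      rw [hrb] at hmod
      have hmlt := Nat.mod_lt r.val hℓpos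
      have hcomm : ℓ * b = b * ℓ := Nat.mul_comm _ _
      have haval : a.val = b * ℓ := rfl
      have hle : a.val ≤ r.val := by omega
      have hdle : r.val - a.val ≤ ℓ - 1 := by omega
      have h1 : P r x ≤ α ^ (r.val - a.val) * P a x :=
        chain a (r.val - a.val) r (by omega) x
      have h2 : α ^ (r.val - a.val) ≤ α ^ (ℓ - 1) :=
        pow_le_pow_right₀ (le_of_lt hα) hdle
      have h3 : α ^ (ℓ - 1) ≤ Real.exp 1 := by
        have hcast : ((ℓ - 1 : ℕ) : ℝ) = (ℓ : ℝ) - 1 := by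
          push_cast [Nat.cast_sub hℓpos]; ring
        have hceil : (ℓ : ℝ) < 1 / Real.log α + 1 :=
          Nat.ceil_lt_add_one (by positivity)
        have h' : (ℓ : ℝ) - 1 ≤ (Real.log α)⁻¹ := by
          rw [div_eq_mul_inv, one_mul] at hceil
          linarith
        have hmul : ((ℓ : ℝ) - 1) * Real.log α ≤ 1 := by
          calc ((ℓ : ℝ) - 1) * Real.log α ≤ (Real.log α)⁻¹ * Real.log α :=
                mul_le_mul_of_nonneg_right h' (le_of_lt hlog)
            _ = 1 := inv_mul_cancel₀ (ne_of_gt hlog)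
        calc α ^ (ℓ - 1) = Real.exp (((ℓ - 1 : ℕ) : ℝ) * Real.log α) := by
              rw [← Real.log_pow, Real.exp_log (by positivity)]
          _ ≤ Real.exp 1 := by
              apply Real.exp_le_exp.mpr
              rw [hcast]; exact hmul
      calc P r x ≤ α ^ (r.val - a.val) * P a x := h1
        _ ≤ Real.exp 1 * P a x := by
            apply mul_le_mul_of_nonneg_right _ (hP0 a x)
            exact le_trans h2 h3
    calc ∑ r ∈ S, ∑ x ∈ 𝒞 r, P r x
        ≤ ∑ r ∈ S, ∑ x ∈ 𝒞 r, Real.exp 1 * P a x := by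
          apply Finset.sum_le_sum
          intro r hr
          exact Finset.sum_le_sum fun x _ => hpt r hr x
      _ = Real.exp 1 * ∑ r ∈ S, ∑ x ∈ 𝒞 r, P a x := by
          rw [Finset.mul_sum]; congr 1; ext r; rw [Finset.mul_sum]
      _ = Real.exp 1 * ∑ x : X, ((S.filter fun r => x ∈ 𝒞 r).card : ℝ) * P a x := by
          congr 1
          have : ∀ r ∈ S, ∑ x ∈ 𝒞 r, P a x = ∑ x : X, if x ∈ 𝒞 r then P a x else 0 := by
            intro r _
            rw [Finset.sum_ite_mem, Finset.univ_inter]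
          rw [Finset.sum_congr rfl this, Finset.sum_comm]
          congr 1; ext x
          rw [← Finset.sum_filter, Finset.sum_const, nsmul_eq_mul]
      _ ≤ Real.exp 1 * ∑ x : X, (C : ℝ) * P a x := by
          apply mul_le_mul_of_nonneg_left _ (le_of_lt (Real.exp_pos 1))
          apply Finset.sum_le_sum
          intro x _
          apply mul_le_mul_of_nonneg_right _ (hP0 a x)
          have hsub : S.filter (fun r => x ∈ 𝒞 r) ⊆ Finset.univ.filter (fun r : Fin T => x ∈ 𝒞 r) := by
            intro r hr
            simp only [hS, Finset.mem_filter, Finset.mem_univ, true_and] at hr ⊢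
            exact hr.2
          exact_mod_cast le_trans (Finset.card_le_card hsub) (h𝒞 x)
      _ = Real.exp 1 * C := by
          rw [← Finset.mul_sum, hP1 a, mul_one]
  have hk : (k : ℝ) ≤ (T : ℝ) * Real.log α + 1 := by
    have h1 : (((T - 1) / ℓ : ℕ) : ℝ) ≤ ((T - 1 : ℕ) : ℝ) / (ℓ : ℝ) := Nat.cast_div_le
    have h2 : ((T - 1 : ℕ) : ℝ) ≤ (T : ℝ) := by
      have : (T - 1 : ℕ) ≤ T := Nat.sub_le _ _
      exact_mod_cast this
    have hℓR : (0:ℝ) < (ℓ : ℝ) := by exact_mod_cast hℓpos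
    have h3 : ((T - 1 : ℕ) : ℝ) / (ℓ : ℝ) ≤ (T : ℝ) / (ℓ : ℝ) := by
      gcongr
    have h4 : (T : ℝ) / (ℓ : ℝ) ≤ (T : ℝ) * Real.log α := by
      rw [div_le_iff₀ hℓR]
      have h5 : 1 ≤ (ℓ : ℝ) * Real.log α := by
        rw [div_le_iff₀ hlog] at hℓge
        linarith
      have hT0 : (0:ℝ) ≤ (T : ℝ) := Nat.cast_nonneg _
      nlinarith
    have : ((k : ℕ) : ℝ) = (((T - 1) / ℓ : ℕ) : ℝ) + 1 := by
      simp [hkdef]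
    rw [this]
    linarith
  calc ∑ r : Fin T, ∑ x ∈ 𝒞 r, P r x
      = ∑ b ∈ Finset.range k,
        ∑ r ∈ Finset.univ.filter (fun r : Fin T => r.val / ℓ = b), ∑ x ∈ 𝒞 r, P r x :=
        hsplit.symm
    _ ≤ ∑ _b ∈ Finset.range k, Real.exp 1 * C := Finset.sum_le_sum hblock
    _ = (k : ℝ) * (Real.exp 1 * C) := by
        rw [Finset.sum_const, Finset.card_range, nsmul_eq_mul]
    _ ≤ (Real.exp 1 * C) * ((T : ℝ) * Real.log α + 1) := by
        rw [mul_comm]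
        apply mul_le_mul_of_nonneg_left hk
        positivity
    _ = Real.exp 1 * C * ((T : ℝ) * Real.log α + 1) := by ring
end

section
/- Let S : Fin T → Fin N → Finset (Fin k) be an approval profile sequence whose tuple conflict number is at most C. Then the number of rounds r for which there is no option θ with θ ∈ S r i for every agent i ∈ Fin N (i.e., rounds in which no single option satisfies all agents) is at most C · N^k. -/
open Finset

theorem rounds_without_consensus_le {k N T C : ℕ}
    (S : Fin T → Fin N → Finset (Fin k))
    (hC : ∀ a : Fin k → Fin N,
      (Finset.univ.filter fun r : Fin T => ∀ i : Fin k, i ∉ S r (a i)).card ≤ C) :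
    (Finset.univ.filter fun r : Fin T =>
      ¬ ∃ θ : Fin k, ∀ i : Fin N, θ ∈ S r i).card ≤ C * N ^ k := by
  classical
  have hsub : (Finset.univ.filter fun r : Fin T =>
      ¬ ∃ θ : Fin k, ∀ i : Fin N, θ ∈ S r i) ⊆
      (Finset.univ : Finset (Fin k → Fin N)).biUnion (fun a =>
        Finset.univ.filter fun r : Fin T => ∀ i : Fin k, i ∉ S r (a i)) := by
    intro r hr
    simp only [mem_filter, mem_univ, true_and] at hr
    push_neg at hr
    choose a ha using hr
    simp only [mem_biUnion, mem_filter, mem_univ, true_and]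
    exact ⟨a, ha⟩
  calc _ ≤ _ := Finset.card_le_card hsub
    _ ≤ ∑ a : Fin k → Fin N,
        (Finset.univ.filter fun r : Fin T => ∀ i : Fin k, i ∉ S r (a i)).card :=
      Finset.card_biUnion_le
    _ ≤ ∑ _a : Fin k → Fin N, C := Finset.sum_le_sum fun a _ => hC a
    _ = C * N ^ k := by
      simp [Finset.sum_const, Fintype.card_fun, mul_comm]
end
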